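/- Let M ≥ 1, let W be a real random variable with W > 0 almost surely, and let (T_j)_{j=1}^M, (X_j)_{j=1}^M be random variables such that T_j is exponentially distributed with mean μ_j > 0, X_j is exponentially distributed with mean λ_j > 0, and W, T₁, X₁, …, T_M, X_M are mutually independent. Let η, ρ, a, u > 0. Then ℙ( max_{1≤j≤M} η·ρ·T_j·W/(a·ρ·X_j + 1) > u ) = 1 − 𝔼[ ∏_{j=1}^M ( 1 − ( η·μ_j·W/(η·μ_j·W + a·λ_j·u) ) · exp( −u/(η·ρ·μ_j·W) ) ) ]. -/

import Mathlib

/-!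
Conditionally on `W = w`, whether eavesdropper `j` fails to intercept depends only on the pair
`(T j, X j)`, and these pairs are independent, so the probability that nobody intercepts is
`𝔼 [∏ j, φ j W]` with `φ j w = ℙ(T j ≤ c + d · X j)` for thresholds `c, d ≥ 0` depending
on `w` (the SINR inequality is linear in `T j` and `X j` because `X j ≥ 0` almost surely).
Given `X j = x`, the exponential CDF gives `1 - exp (-(c + d x) / μ j)`, and averaging over `x`
with the Laplace transform `𝔼 [exp (-s X)] = 1 / (1 + s λ)` of an exponential law of mean `λ`
yields the closed form.
-/

open MeasureTheory ProbabilityTheory Real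

/-- A real random variable `X` is exponentially distributed with mean `lam > 0` if its law has
density `(1/lam) * exp (-x/lam)` on `[0, ∞)` and `0` on `(-∞, 0)`. -/
def HasExpLaw {Ω : Type*} [MeasurableSpace Ω] (P : Measure Ω) (X : Ω → ℝ) (lam : ℝ) : Prop :=
  Measurable X ∧
    P.map X = MeasureTheory.volume.withDensity
      (fun x => ENNReal.ofReal (if 0 ≤ x then (1 / lam) * Real.exp (-x / lam) else 0))

open Set

lemma expMeasure_eq_withDensity (r : ℝ) :
    expMeasure r = volume.withDensity (exponentialPDF r) :=
  rfl

lemma HasExpLaw.map_eq {Ω : Type*} [MeasurableSpace Ω] {P : Measure Ω} {X : Ω → ℝ} {lam : ℝ}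
    (h : HasExpLaw P X lam) : P.map X = expMeasure lam⁻¹ := by
  rw [h.2, expMeasure_eq_withDensity]
  congr with x
  rw [exponentialPDF_eq, one_div, neg_div, div_eq_inv_mul]

lemma measureReal_expMeasure_Iic {r c : ℝ} (hr : 0 < r) (hc : 0 ≤ c) :
    (expMeasure r).real (Iic c) = 1 - exp (-(r * c)) := by
  have := isProbabilityMeasure_expMeasure hr
  rw [← cdf_eq_real, cdf_expMeasure_eq hr, if_pos hc]

lemma integral_exp_neg_mul_expMeasure {r b : ℝ} (hr : 0 < r) (hb : 0 ≤ b) :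
    ∫ x, exp (-(b * x)) ∂expMeasure r = r / (r + b) := by
  have hdensity : ∀ x, (exponentialPDF r x).toReal * exp (-(b * x))
      = (Ici 0).indicator (fun x => r * exp (-(r + b) * x)) x := by
    intro x
    rw [exponentialPDF_eq, ENNReal.toReal_ofReal (by split_ifs <;> positivity)]
    by_cases hx : 0 ≤ x
    · rw [if_pos hx, indicator_of_mem (mem_Ici.2 hx), mul_assoc, ← exp_add]
      ring_nf
    · rw [if_neg hx, indicator_of_notMem (by simpa using hx), zero_mul]
  have hrb : -(r + b) < 0 := by linarith
  rw [expMeasure_eq_withDensity,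
    integral_withDensity_eq_integral_toReal_smul (f := exponentialPDF r)
      (measurable_exponentialPDFReal r).ennreal_ofReal (ae_of_all _ fun _ => ENNReal.ofReal_lt_top)]
  simp_rw [smul_eq_mul, hdensity]
  rw [integral_indicator measurableSet_Ici, integral_Ici_eq_integral_Ioi, integral_const_mul,
    integral_exp_mul_Ioi hrb, mul_zero, exp_zero]
  field_simp

lemma ae_nonneg_expMeasure (r : ℝ) : ∀ᵐ x ∂expMeasure r, 0 ≤ x := by
  rw [ae_iff]
  simp only [not_le]
  change expMeasure r (Iio 0) = 0
  rw [expMeasure_eq_withDensity, withDensity_apply _ measurableSet_Iio]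
  exact lintegral_exponentialPDF_of_nonpos le_rfl

lemma measureReal_expMeasure_prod {r s c d : ℝ} (hr : 0 < r) (hs : 0 < s) (hc : 0 ≤ c)
    (hd : 0 ≤ d) {S : Set (ℝ × ℝ)} (hS : MeasurableSet S)
    (hSlice : ∀ t x, 0 ≤ x → ((t, x) ∈ S ↔ t ≤ c + d * x)) :
    ((expMeasure r).prod (expMeasure s)).real S = 1 - exp (-(r * c)) * (s / (s + r * d)) := by
  have := isProbabilityMeasure_expMeasure hr
  have := isProbabilityMeasure_expMeasure hs
  have hslice : ∀ᵐ x ∂expMeasure s,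
      (expMeasure r ((fun t => (t, x)) ⁻¹' S)).toReal
        = 1 - exp (-(r * c)) * exp (-(r * d * x)) := by
    filter_upwards [ae_nonneg_expMeasure s] with x hx
    have hIic : (fun t => (t, x)) ⁻¹' S = Iic (c + d * x) := by
      ext t
      exact hSlice t x hx
    rw [hIic, ← measureReal_def, measureReal_expMeasure_Iic hr (by positivity), ← exp_add]
    ring_nf
  have hint : Integrable (fun x => exp (-(r * d * x))) (expMeasure s) := by
    refine (integrable_const 1).mono' (by fun_prop) ?_
    filter_upwards [ae_nonneg_expMeasure s] with x hx
    rw [norm_of_nonneg (exp_pos _).le, exp_le_one_iff, neg_nonpos]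
    positivity
  rw [measureReal_def, Measure.prod_apply_symm hS,
    ← integral_toReal (measurable_measure_prodMk_right hS).aemeasurable
      (ae_of_all _ fun _ => measure_lt_top _ _),
    integral_congr_ae hslice, integral_sub (integrable_const 1) (hint.const_mul _),
    integral_const_mul, integral_exp_neg_mul_expMeasure hs (by positivity)]
  simp

lemma measurableSet_setOf_forall_prodMk_mem {β ι : Type*} [Countable ι] {γ : ι → Type*}
    [MeasurableSpace β] [∀ i, MeasurableSpace (γ i)] {S : ∀ i, Set (β × γ i)}
    (hS : ∀ i, MeasurableSet (S i)) :
    MeasurableSet {p : β × (∀ i, γ i) | ∀ i, (p.1, p.2 i) ∈ S i} := by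
  simp only [ofPred_forall]
  exact .iInter fun i =>
    (measurable_fst.prodMk ((measurable_pi_apply i).comp measurable_snd)) (hS i)

lemma measureReal_prod_pi_setOf_forall_mem {β ι : Type*} [Fintype ι] {γ : ι → Type*}
    [MeasurableSpace β] [∀ i, MeasurableSpace (γ i)] (ν : Measure β) [IsFiniteMeasure ν]
    (κ : ∀ i, Measure (γ i)) [∀ i, IsFiniteMeasure (κ i)] {S : ∀ i, Set (β × γ i)}
    (hS : ∀ i, MeasurableSet (S i)) :
    (ν.prod (Measure.pi κ)).real {p | ∀ i, (p.1, p.2 i) ∈ S i}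
      = ∫ w, ∏ i, (κ i).real (Prod.mk w ⁻¹' S i) ∂ν := by
  have hA := measurableSet_setOf_forall_prodMk_mem hS
  have hslice : ∀ w, Prod.mk w ⁻¹' {p : β × (∀ i, γ i) | ∀ i, (p.1, p.2 i) ∈ S i}
      = univ.pi fun i => Prod.mk w ⁻¹' S i := fun w => by ext; simp
  rw [measureReal_def, Measure.prod_apply hA,
    ← integral_toReal (measurable_measure_prodMk_left hA).aemeasurable
      (ae_of_all _ fun _ => measure_lt_top _ _)]
  simp_rw [hslice, Measure.pi_pi, ENNReal.toReal_prod, measureReal_def]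

lemma map_eq_prod_pi_prod_of_iIndepFun {Ω β ι : Type*} [MeasurableSpace Ω] [MeasurableSpace β]
    [Fintype ι] {P : Measure Ω} [IsProbabilityMeasure P] {W : Ω → β} {T X : ι → Ω → β}
    (hW : Measurable W) (hT : ∀ j, Measurable (T j)) (hX : ∀ j, Measurable (X j))
    (hindep : iIndepFun (Sum.elim (fun _ : Unit => W) (Sum.elim T X)) P) :
    P.map (fun ω => (W ω, fun j => (T j ω, X j ω)))
      = (P.map W).prod (Measure.pi fun j => (P.map (T j)).prod (P.map (X j))) := by
  set F := Sum.elim (fun _ : Unit => W) (Sum.elim T X)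
  have hF : ∀ i, Measurable (F i) := by
    rintro (_ | j | j)
    exacts [hW, hT j, hX j]
  have hjoint : MeasurePreserving (fun ω i => F i ω) P (Measure.pi fun i => P.map (F i)) :=
    ⟨measurable_pi_lambda _ hF, hindep.map_fun_eq_pi_map fun i => (hF i).aemeasurable⟩
  have hW' : MeasurePreserving (MeasurableEquiv.funUnique Unit β)
      (Measure.pi fun i => P.map (F (.inl i))) (P.map W) :=
    measurePreserving_funUnique (P.map W) Unit
  have hTX := (measurePreserving_arrowProdEquivProdArrow β β ι (fun j => P.map (T j))
    (fun j => P.map (X j))).symm.comp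
      (measurePreserving_sumPiEquivProdPi fun i => P.map (F (.inr i)))
  -- regroup `Unit ⊕ (ι ⊕ ι) → β` as `β × (ι → β × β)`
  exact (((hW'.prod hTX).comp (measurePreserving_sumPiEquivProdPi _)).comp hjoint).map_eq

lemma measureReal_forall_mem_eq_integral_of_iIndepFun {Ω β ι : Type*} [MeasurableSpace Ω]
    [MeasurableSpace β] [Fintype ι] {P : Measure Ω} [IsProbabilityMeasure P] {W : Ω → β}
    {T X : ι → Ω → β} (hW : Measurable W) (hT : ∀ j, Measurable (T j))
    (hX : ∀ j, Measurable (X j))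
    (hindep : iIndepFun (Sum.elim (fun _ : Unit => W) (Sum.elim T X)) P)
    {S : ι → Set (β × β × β)} (hS : ∀ j, MeasurableSet (S j)) :
    P.real {ω | ∀ j, (W ω, T j ω, X j ω) ∈ S j}
      = ∫ ω, ∏ j, ((P.map (T j)).prod (P.map (X j))).real (Prod.mk (W ω) ⁻¹' S j) ∂P := by
  have hΨ : Measurable fun ω => (W ω, fun j => (T j ω, X j ω)) :=
    hW.prodMk (measurable_pi_lambda _ fun j => (hT j).prodMk (hX j))
  change P.real ((fun ω => (W ω, fun j => (T j ω, X j ω))) ⁻¹'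
    {p : β × (ι → β × β) | ∀ j, (p.1, p.2 j) ∈ S j}) = _
  rw [← map_measureReal_apply hΨ (measurableSet_setOf_forall_prodMk_mem hS),
    map_eq_prod_pi_prod_of_iIndepFun hW hT hX hindep,
    measureReal_prod_pi_setOf_forall_mem _ _ hS, integral_map hW.aemeasurable]
  exact (Finset.measurable_prod _ fun j _ =>
      (measurable_measure_prodMk_left (hS j)).ennreal_toReal).aestronglyMeasurable

lemma measureReal_expMeasure_prod_sinr_le {μ lam η ρ a u w : ℝ} (hμ : 0 < μ) (hlam : 0 < lam)
    (hη : 0 < η) (hρ : 0 < ρ) (ha : 0 ≤ a) (hu : 0 ≤ u) (hw : 0 < w) :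
    ((expMeasure μ⁻¹).prod (expMeasure lam⁻¹)).real
        {p | η * ρ * p.1 * w / (a * ρ * p.2 + 1) ≤ u}
      = 1 - (η * μ * w / (η * μ * w + a * lam * u)) * exp (-u / (η * ρ * μ * w)) := by
  have hS : MeasurableSet {p : ℝ × ℝ | η * ρ * p.1 * w / (a * ρ * p.2 + 1) ≤ u} :=
    measurableSet_le (by fun_prop) measurable_const
  rw [measureReal_expMeasure_prod (inv_pos.2 hμ) (inv_pos.2 hlam)
    (c := u / (η * ρ * w)) (d := a * u / (η * w)) (by positivity) (by positivity) hS]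
  · have : η * μ * w + a * lam * u ≠ 0 := by positivity
    field_simp
  · intro t x hx
    have hthreshold :
        u / (η * ρ * w) + a * u / (η * w) * x = u * (a * ρ * x + 1) / (η * ρ * w) := by
      field_simp
      ring
    rw [mem_ofPred_eq, hthreshold, div_le_iff₀ (by positivity), le_div_iff₀ (by positivity)]
    constructor <;> intro h <;> linarith

theorem stmt_16_general {Ω : Type*} [MeasurableSpace Ω] (P : Measure Ω) [IsProbabilityMeasure P]
    (M : ℕ) (μ lam : Fin M → ℝ)
    (hμ : ∀ j, 0 < μ j) (hlam : ∀ j, 0 < lam j)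
    (η ρ a u : ℝ) (hη : 0 < η) (hρ : 0 < ρ) (ha : 0 < a) (hu : 0 < u)
    (W : Ω → ℝ) (hWmeas : Measurable W) (hWpos : ∀ᵐ ω ∂P, 0 < W ω)
    (T X : Fin M → Ω → ℝ)
    (hT : ∀ j, HasExpLaw P (T j) (μ j)) (hX : ∀ j, HasExpLaw P (X j) (lam j))
    (hindep : iIndepFun
      (Sum.elim (fun (_ : Unit) => W) (Sum.elim T X)) P) :
    (P {ω | ∃ j : Fin M, η * ρ * T j ω * W ω / (a * ρ * X j ω + 1) > u}).toReal =
      1 - ∫ ω, ∏ j : Fin M,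
        (1 - (η * μ j * W ω / (η * μ j * W ω + a * lam j * u)) *
          Real.exp (-u / (η * ρ * μ j * W ω))) ∂P := by
  set S := {q : ℝ × ℝ × ℝ | η * ρ * q.2.1 * q.1 / (a * ρ * q.2.2 + 1) ≤ u}
  have hS : MeasurableSet S := measurableSet_le (by fun_prop) measurable_const
  have hTmeas j := (hT j).1
  have hXmeas j := (hX j).1
  have hsafe : MeasurableSet {ω | ∀ j, (W ω, T j ω, X j ω) ∈ S} := by
    simp only [ofPred_forall]
    exact .iInter fun j => (hWmeas.prodMk ((hTmeas j).prodMk (hXmeas j))) hS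
  have hintercept : {ω | ∃ j : Fin M, η * ρ * T j ω * W ω / (a * ρ * X j ω + 1) > u}
      = {ω | ∀ j, (W ω, T j ω, X j ω) ∈ S}ᶜ := by
    ext ω
    simp [S]
  rw [hintercept, ← measureReal_def, probReal_compl_eq_one_sub hsafe,
    measureReal_forall_mem_eq_integral_of_iIndepFun hWmeas hTmeas hXmeas hindep fun _ => hS]
  congr 1
  refine integral_congr_ae ?_
  filter_upwards [hWpos] with ω hω
  refine Finset.prod_congr rfl fun j _ => ?_
  rw [(hT j).map_eq, (hX j).map_eq]
  exact measureReal_expMeasure_prod_sinr_le (hμ j) (hlam j) hη hρ ha.le hu.le hω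

theorem stmt_16 {Ω : Type*} [MeasurableSpace Ω] (P : Measure Ω) [IsProbabilityMeasure P]
    (M : ℕ) (hM : 1 ≤ M) (μ lam : Fin M → ℝ)
    (hμ : ∀ j, 0 < μ j) (hlam : ∀ j, 0 < lam j)
    (η ρ a u : ℝ) (hη : 0 < η) (hρ : 0 < ρ) (ha : 0 < a) (hu : 0 < u)
    (W : Ω → ℝ) (hWmeas : Measurable W) (hWpos : ∀ᵐ ω ∂P, 0 < W ω)
    (T X : Fin M → Ω → ℝ)
    (hT : ∀ j, HasExpLaw P (T j) (μ j)) (hX : ∀ j, HasExpLaw P (X j) (lam j))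
    (hindep : iIndepFun
      (Sum.elim (fun (_ : Unit) => W) (Sum.elim T X)) P) :
    (P {ω | ∃ j : Fin M, η * ρ * T j ω * W ω / (a * ρ * X j ω + 1) > u}).toReal =
      1 - ∫ ω, ∏ j : Fin M,
        (1 - (η * μ j * W ω / (η * μ j * W ω + a * lam j * u)) *
          Real.exp (-u / (η * ρ * μ j * W ω))) ∂P :=
  stmt_16_general P M μ lam hμ hlam η ρ a u hη hρ ha hu W hWmeas hWpos T X hT hX hindep
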